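/- Let X be a progressively measurable càdlàg real-valued process on a filtered probability space satisfying the usual hypotheses, and let f : ℝ → ℝ be a continuous function. If X is sticky, then the process f(X) = (f(X_t))_{t≥0} is also sticky. -/

import Mathlib

open MeasureTheory Filter Set Topology
open scoped NNReal ENNReal

/-- A real-valued process indexed by `ℝ≥0` is càdlàg: every path is right-continuous
and has a left limit at every positive time. -/
def IsCadlag {Ω : Type*} (X : ℝ≥0 → Ω → ℝ) : Prop :=
  ∀ ω, (∀ t : ℝ≥0, ContinuousWithinAt (fun s => X s ω) (Set.Ici t) t) ∧
    ∀ t : ℝ≥0, 0 < t → ∃ l : ℝ,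
      Filter.Tendsto (fun s => X s ω) (nhdsWithin t (Set.Iio t)) (nhds l)

/-- A process `X` is sticky with respect to the filtration `𝓕` and the measure `P` if
for all `ε > 0`, all `T > 0` and all stopping times `τ` with `P(τ < T) > 0`, we have
`P(sup_{t ∈ [τ, T]} |X_τ - X_t| < ε, τ < T) > 0`. -/
def Sticky {Ω : Type*} {m : MeasurableSpace Ω} (𝓕 : MeasureTheory.Filtration ℝ≥0 m)
    (P : MeasureTheory.Measure Ω) (X : ℝ≥0 → Ω → ℝ) : Prop :=
  ∀ ε : ℝ, 0 < ε → ∀ T : ℝ≥0, 0 < T → ∀ τ : Ω → ℝ≥0,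
    MeasureTheory.IsStoppingTime 𝓕 (fun ω => (τ ω : WithTop ℝ≥0)) → 0 < P {ω | τ ω < T} →
    0 < P ({ω | (⨆ t ∈ Set.Icc (τ ω) T, |X (τ ω) ω - X t ω|) < ε} ∩ {ω | τ ω < T})

/-!
Choose `M` such that the event `A = {|X_τ| ≤ M, τ < T}` has positive probability. It lies in
`𝓕_τ`, so stickiness of `X` may be applied to the stopping time equal to `τ` on `A` and to `T`
off `A`; its event `{τ < T}` is exactly `A`. On `A` the path stays within `δ` of `X_τ` on
`[τ, T]`, where `δ` is a modulus of uniform continuity of `f` at the compact set `[-M, M]`, so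
`f(X)` stays within `ε / 2` of `f(X_τ)`.

The supremum in `Sticky` is a real supremum, which is `0` when unbounded; it controls the
individual deviations only because càdlàg paths are bounded on compact time intervals.
-/

lemma exists_mem_nhds_isBounded_image {α Y : Type*} [TopologicalSpace α] [LinearOrder α]
    [OrderTopology α] [PseudoMetricSpace Y] {f : α → Y} {t : α} {a b : Y}
    (hl : Tendsto f (𝓝[<] t) (𝓝 a)) (hr : Tendsto f (𝓝[≥] t) (𝓝 b)) :
    ∃ U ∈ 𝓝 t, Bornology.IsBounded (f '' U) := by
  refine ⟨f ⁻¹' (Metric.ball a 1 ∪ Metric.ball b 1), ?_, ?_⟩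
  · rw [← nhdsLT_sup_nhdsGE, mem_sup]
    exact ⟨hl (mem_of_superset (Metric.ball_mem_nhds a one_pos) subset_union_left),
      hr (mem_of_superset (Metric.ball_mem_nhds b one_pos) subset_union_right)⟩
  · exact (Metric.isBounded_ball.union Metric.isBounded_ball).subset (image_preimage_subset _ _)

lemma IsCadlag.isBounded_image {Ω : Type*} {X : ℝ≥0 → Ω → ℝ} (hX : IsCadlag X) (ω : Ω)
    {K : Set ℝ≥0} (hK : IsCompact K) : Bornology.IsBounded ((fun t => X t ω) '' K) := by
  refine Bornology.isBounded_image_of_isLocallyBounded_of_isCompact hK fun t => ?_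
  have hleft : ∃ l, Tendsto (fun s => X s ω) (𝓝[<] t) (𝓝 l) := by
    rcases eq_zero_or_pos t with rfl | ht
    · exact ⟨0, by simp⟩
    · exact (hX ω).2 t ht
  obtain ⟨l, hl⟩ := hleft
  exact exists_mem_nhds_isBounded_image hl ((hX ω).1 t)

lemma le_ciSup₂_of_mem {ι α : Type*} [ConditionallyCompleteLattice α] {g : ι → α} {s : Set ι}
    (hg : BddAbove (g '' s)) {i : ι} (hi : i ∈ s) : g i ≤ ⨆ j ∈ s, g j :=
  le_ciSup₂ (f := fun j (_ : j ∈ s) => g j)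
    (hg.mono (iUnion_subset fun _ => range_subset_iff.2 fun hj => mem_image_of_mem g hj)) i hi

lemma biSup_abs_sub_comp_le {ι : Type*} {x : ι → ℝ} {s : Set ι} {a : ι}
    (hx : Bornology.IsBounded (x '' s)) {f : ℝ → ℝ} {δ η : ℝ} (hη : 0 ≤ η)
    (hf : ∀ y, |x a - y| < δ → |f (x a) - f y| ≤ η) (h : ⨆ t ∈ s, |x a - x t| < δ) :
    ⨆ t ∈ s, |f (x a) - f (x t)| ≤ η := by
  obtain ⟨r, hr⟩ := (Metric.isBounded_iff_subset_closedBall (x a)).1 hx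
  have hbdd : BddAbove ((fun t => |x a - x t|) '' s) := by
    refine ⟨r, forall_mem_image.2 fun t ht => ?_⟩
    simpa [Real.dist_eq, abs_sub_comm] using hr (mem_image_of_mem x ht)
  refine Real.iSup_le (fun t => Real.iSup_le (fun ht => hf _ ?_) hη) hη
  exact (le_ciSup₂_of_mem (g := fun t => |x a - x t|) hbdd ht).trans_lt h

lemma Continuous.exists_pos_forall_abs_sub_lt {f : ℝ → ℝ} (hf : Continuous f) (M : ℝ)
    {ε : ℝ} (hε : 0 < ε) :
    ∃ δ > 0, ∀ a b : ℝ, |a| ≤ M → |a - b| < δ → |f a - f b| < ε := by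
  have hU := (isCompact_closedBall (0 : ℝ) M).uniformContinuousAt_of_continuousAt f
    (fun a _ => hf.continuousAt) (Metric.dist_mem_uniformity hε)
  obtain ⟨δ, hδ, hfδ⟩ := Metric.mem_uniformity_dist.1 hU
  refine ⟨δ, hδ, fun a b ha hab => ?_⟩
  simpa [Real.dist_eq] using hfδ (by simpa [Real.dist_eq] using hab) (by simpa using ha)

lemma exists_measure_inter_abs_le_pos {Ω : Type*} [MeasurableSpace Ω] {μ : Measure Ω}
    {s : Set Ω} (hs : 0 < μ s) (g : Ω → ℝ) : ∃ n : ℕ, 0 < μ ({ω | |g ω| ≤ n} ∩ s) := by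
  refine exists_measure_pos_of_not_measure_iUnion_null fun h => hs.ne' (measure_mono_null ?_ h)
  exact fun ω hω => mem_iUnion.2 ⟨⌈|g ω|⌉₊, mem_inter (Nat.le_ceil |g ω|) hω⟩

lemma MeasureTheory.IsStoppingTime.piecewise_const_of_le {Ω ι : Type*} {m : MeasurableSpace Ω}
    [LinearOrder ι] {𝓕 : Filtration ι m} {τ : Ω → ι}
    (hτ : IsStoppingTime 𝓕 fun ω => (τ ω : WithTop ι)) {A : Set Ω} [DecidablePred (· ∈ A)]
    (hA : MeasurableSet[hτ.measurableSpace] A) {T : ι} (hAT : ∀ ω ∈ A, τ ω ≤ T) :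
    IsStoppingTime 𝓕 fun ω => ((A.piecewise τ fun _ => T) ω : WithTop ι) := by
  intro i
  by_cases hTi : T ≤ i
  · convert MeasurableSet.univ
    ext ω
    by_cases hω : ω ∈ A
    · simp [hω, (hAT ω hω).trans hTi]
    · simp [hω, hTi]
  · convert hA.2 i using 1
    ext ω
    by_cases hω : ω ∈ A <;> simp [hω, hTi]

lemma Sticky.measure_pos_inter {Ω : Type*} {m : MeasurableSpace Ω} {𝓕 : Filtration ℝ≥0 m}
    {P : Measure Ω} {X : ℝ≥0 → Ω → ℝ} (hX : Sticky 𝓕 P X) {ε : ℝ} (hε : 0 < ε) {T : ℝ≥0}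
    (hT : 0 < T) {τ : Ω → ℝ≥0} (hτ : IsStoppingTime 𝓕 fun ω => (τ ω : WithTop ℝ≥0))
    {A : Set Ω} (hA : MeasurableSet[hτ.measurableSpace] A) (hAT : ∀ ω ∈ A, τ ω < T)
    (hA_pos : 0 < P A) :
    0 < P ({ω | (⨆ t ∈ Icc (τ ω) T, |X (τ ω) ω - X t ω|) < ε} ∩ A) := by
  classical
  have hτA := hτ.piecewise_const_of_le hA fun ω hω => (hAT ω hω).le
  have hlt : {ω | A.piecewise τ (fun _ => T) ω < T} = A := by
    ext ω
    by_cases hω : ω ∈ A <;> simp [hω, hAT]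
  convert hX ε hε T hT _ hτA (by rwa [hlt]) using 2
  ext ω
  by_cases hω : ω ∈ A <;> simp [hω, hAT]

theorem sticky_comp_continuous_general {Ω : Type*} {m : MeasurableSpace Ω}
    (𝓕 : MeasureTheory.Filtration ℝ≥0 m) (P : MeasureTheory.Measure Ω)
    (X : ℝ≥0 → Ω → ℝ) (hprog : MeasureTheory.ProgMeasurable 𝓕 X) (hcadlag : IsCadlag X)
    (f : ℝ → ℝ) (hf : Continuous f) (hsticky : Sticky 𝓕 P X) :
    Sticky 𝓕 P (fun t ω => f (X t ω)) := by
  intro ε hε T hT τ hτ hpos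
  set S := stoppedValue X fun ω => (τ ω : WithTop ℝ≥0)
  obtain ⟨M, hM⟩ := exists_measure_inter_abs_le_pos hpos S
  have hA : MeasurableSet[hτ.measurableSpace] ({ω | |S ω| ≤ M} ∩ {ω | τ ω < T}) := by
    have hS : Measurable[hτ.measurableSpace] fun ω => |S ω| :=
      continuous_abs.measurable.comp (measurable_stoppedValue hprog hτ)
    refine (hS measurableSet_Iic).inter ?_
    simpa only [WithTop.coe_lt_coe] using hτ.measurableSet_lt' T
  obtain ⟨δ, hδ, hfδ⟩ := hf.exists_pos_forall_abs_sub_lt M (half_pos hε)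
  refine (hsticky.measure_pos_inter hδ hT hτ hA (fun ω hω => hω.2) hM).trans_le
    (measure_mono ?_)
  rintro ω ⟨hsup, hSM, hτT⟩
  refine ⟨?_, hτT⟩
  exact (biSup_abs_sub_comp_le (hcadlag.isBounded_image ω isCompact_Icc) (half_pos hε).le
    (fun y hy => (hfδ _ _ hSM hy).le) hsup).trans_lt (half_lt_self hε)

/-- If `X` is a progressively measurable càdlàg sticky process and `f : ℝ → ℝ` is
continuous, then `f(X)` is sticky. -/
theorem sticky_comp_continuous {Ω : Type*} {m : MeasurableSpace Ω}
    (𝓕 : MeasureTheory.Filtration ℝ≥0 m) (P : MeasureTheory.Measure Ω)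
    [MeasureTheory.IsProbabilityMeasure P] [P.IsComplete]
    (hRC : ∀ t : ℝ≥0, (𝓕 t : MeasurableSpace Ω)
      = ⨅ s : ℝ≥0, ⨅ _ : t < s, (𝓕 s : MeasurableSpace Ω))
    (hNull : ∀ N : Set Ω, MeasurableSet N → P N = 0 → MeasurableSet[𝓕 0] N)
    (X : ℝ≥0 → Ω → ℝ) (hprog : MeasureTheory.ProgMeasurable 𝓕 X) (hcadlag : IsCadlag X)
    (f : ℝ → ℝ) (hf : Continuous f) (hsticky : Sticky 𝓕 P X) :
    Sticky 𝓕 P (fun t ω => f (X t ω)) :=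
  sticky_comp_continuous_general 𝓕 P X hprog hcadlag f hf hsticky
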